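/- On the double tetrahedron with the family of equihedral metrics ℓ(t) = (t,1,1,1,1,t) for t ∈ (1,√2), the total curvature EHR(t) = 2(2π - 2β_12(t))t + 4(2π - 2β_13(t)) tends to 8π and the volume tends to 0 as t → √2⁻; hence VEHR(t) = EHR(t)/V(t)^{1/3} → +∞, so VEHR is unbounded above on the double tetrahedron. -/

import Mathlib

noncomputable def dihedralAngle (p q r s : EuclideanSpace ℝ (Fin 3)) : ℝ :=
  InnerProductGeometry.angle
    ((r - p) - ((inner ℝ (r - p) (q - p) : ℝ) / ‖q - p‖ ^ 2) • (q - p))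
    ((s - p) - ((inner ℝ (s - p) (q - p) : ℝ) / ‖q - p‖ ^ 2) • (q - p))

noncomputable def edgeK (v : Fin 4 → EuclideanSpace ℝ (Fin 3)) (i j k l : Fin 4) : ℝ :=
  (2 * Real.pi - 2 * dihedralAngle (v i) (v j) (v k) (v l)) * dist (v i) (v j)

/-- Total curvature `EHR = Σ_e (2π - 2β_e) ℓ_e` of the double tetrahedron generated by the
tetrahedron on `v 0, v 1, v 2, v 3`. -/
noncomputable def EHR (v : Fin 4 → EuclideanSpace ℝ (Fin 3)) : ℝ :=
  edgeK v 0 1 2 3 + edgeK v 0 2 1 3 + edgeK v 0 3 1 2 +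
    edgeK v 1 2 0 3 + edgeK v 1 3 0 2 + edgeK v 2 3 0 1

noncomputable def tetraVolume (v : Fin 4 → EuclideanSpace ℝ (Fin 3)) : ℝ :=
  |Matrix.det (Matrix.of fun i j : Fin 3 => (v i.succ - v 0) j)| / 6

/-! The six edge lengths fix the Gram matrix of the tetrahedron, so its dihedral angles and volume
are explicit in `t`: the angle at an edge of length `t` is `arccos ((4 - 3t²)/(4 - t²))`, the
angle at a unit edge is `arccos (t²/(4 - t²))`, and the volume is `t²√(1 - t²/2)/6`. At `t = √2`
these angles become `π` and `0`, so `EHR → 8π` while the volume vanishes, and a positive limit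
divided by `V^{1/3} → 0⁺` tends to `+∞`. -/

open Real RealInnerProductSpace Matrix Filter Topology

section InnerProductSpace

variable {E : Type*} [NormedAddCommGroup E] [InnerProductSpace ℝ E]

lemma inner_sub_sub_eq_dist_sq (p q r : E) :
    ⟪q - p, r - p⟫ = (dist p q ^ 2 + dist p r ^ 2 - dist q r ^ 2) / 2 := by
  rw [real_inner_eq_norm_mul_self_add_norm_mul_self_sub_norm_sub_mul_self_div_two,
    sub_sub_sub_cancel_right, dist_eq_norm' p q, dist_eq_norm' p r, dist_eq_norm q r]
  ring

lemma inner_sub_smul_sub_smul (x y u : E) :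
    ⟪x - (⟪x, u⟫ / ‖u‖ ^ 2) • u, y - (⟪y, u⟫ / ‖u‖ ^ 2) • u⟫ =
      ⟪x, y⟫ - ⟪x, u⟫ * ⟪y, u⟫ / ‖u‖ ^ 2 := by
  rcases eq_or_ne u 0 with rfl | hu
  · simp
  · have : ‖u‖ ^ 2 ≠ 0 := by positivity
    simp only [inner_sub_left, inner_sub_right, real_inner_smul_left, real_inner_smul_right,
      real_inner_self_eq_norm_sq, real_inner_comm u]
    field_simp
    ring

end InnerProductSpace

lemma dihedralAngle_eq_arccos (p q r s : EuclideanSpace ℝ (Fin 3)) :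
    dihedralAngle p q r s =
      arccos ((⟪r - p, s - p⟫ - ⟪r - p, q - p⟫ * ⟪s - p, q - p⟫ / ‖q - p‖ ^ 2) /
        (√(‖r - p‖ ^ 2 - ⟪r - p, q - p⟫ ^ 2 / ‖q - p‖ ^ 2) *
          √(‖s - p‖ ^ 2 - ⟪s - p, q - p⟫ ^ 2 / ‖q - p‖ ^ 2))) := by
  rw [dihedralAngle, InnerProductGeometry.angle, norm_eq_sqrt_real_inner (r - p - _),
    norm_eq_sqrt_real_inner (s - p - _), inner_sub_smul_sub_smul, inner_sub_smul_sub_smul,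
    inner_sub_smul_sub_smul]
  simp only [real_inner_self_eq_norm_sq, ← sq]

lemma dihedralAngle_long_edge {t : ℝ} (ht4 : t ^ 2 ≤ 4)
    {p q r s : EuclideanSpace ℝ (Fin 3)} (hpq : dist p q = t) (hrs : dist r s = t)
    (hpr : dist p r = 1) (hps : dist p s = 1) (hqr : dist q r = 1) (hqs : dist q s = 1) :
    dihedralAngle p q r s = arccos ((4 - 3 * t ^ 2) / (4 - t ^ 2)) := by
  have hu : ‖q - p‖ ^ 2 = t ^ 2 := by rw [← dist_eq_norm', hpq]
  have hx : ‖r - p‖ ^ 2 = 1 := by rw [← dist_eq_norm', hpr, one_pow]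
  have hy : ‖s - p‖ ^ 2 = 1 := by rw [← dist_eq_norm', hps, one_pow]
  have hix : ⟪r - p, q - p⟫ = t ^ 2 / 2 := by
    rw [inner_sub_sub_eq_dist_sq, hpr, hpq, dist_comm, hqr]; ring
  have hiy : ⟪s - p, q - p⟫ = t ^ 2 / 2 := by
    rw [inner_sub_sub_eq_dist_sq, hps, hpq, dist_comm, hqs]; ring
  have hixy : ⟪r - p, s - p⟫ = 1 - t ^ 2 / 2 := by
    rw [inner_sub_sub_eq_dist_sq, hpr, hps, hrs]; ring
  rw [dihedralAngle_eq_arccos, hu, hx, hy, hix, hiy, hixy, Real.mul_self_sqrt]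
  · congr 1
    field_simp
    ring
  · field_simp
    linarith

lemma dihedralAngle_unit_edge {t : ℝ} (ht : 0 < t) (ht4 : t ^ 2 < 4)
    {p q r s : EuclideanSpace ℝ (Fin 3)} (hpq : dist p q = 1) (hrs : dist r s = 1)
    (hpr : dist p r = t) (hps : dist p s = 1) (hqr : dist q r = 1) (hqs : dist q s = t) :
    dihedralAngle p q r s = arccos (t ^ 2 / (4 - t ^ 2)) := by
  have hu : ‖q - p‖ ^ 2 = 1 := by rw [← dist_eq_norm', hpq, one_pow]
  have hx : ‖r - p‖ ^ 2 = t ^ 2 := by rw [← dist_eq_norm', hpr]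
  have hy : ‖s - p‖ ^ 2 = 1 := by rw [← dist_eq_norm', hps, one_pow]
  have hix : ⟪r - p, q - p⟫ = t ^ 2 / 2 := by
    rw [inner_sub_sub_eq_dist_sq, hpr, hpq, dist_comm, hqr]; ring
  have hiy : ⟪s - p, q - p⟫ = 1 - t ^ 2 / 2 := by
    rw [inner_sub_sub_eq_dist_sq, hps, hpq, dist_comm, hqs]; ring
  have hixy : ⟪r - p, s - p⟫ = t ^ 2 / 2 := by
    rw [inner_sub_sub_eq_dist_sq, hpr, hps, hrs]; ring
  have hpos : 0 < t ^ 2 - (t ^ 2 / 2) ^ 2 / 1 := by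
    nlinarith [mul_pos (pow_pos ht 2) (sub_pos.2 ht4)]
  rw [dihedralAngle_eq_arccos, hu, hx, hy, hix, hiy, hixy,
    show (1 : ℝ) - (1 - t ^ 2 / 2) ^ 2 / 1 = t ^ 2 - (t ^ 2 / 2) ^ 2 / 1 by ring,
    Real.mul_self_sqrt]
  · congr 1
    rw [div_eq_div_iff hpos.ne' (by linarith)]
    ring
  · exact hpos.le

lemma sq_six_mul_tetraVolume (w : Fin 4 → EuclideanSpace ℝ (Fin 3)) :
    (6 * tetraVolume w) ^ 2 = (gram ℝ fun i : Fin 3 => w i.succ - w 0).det := by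
  have hrepr : (of fun i j => (EuclideanSpace.basisFun (Fin 3) ℝ).repr (w j.succ - w 0) i) =
      (of fun i j : Fin 3 => (w i.succ - w 0) j)ᵀ := by
    ext i j
    simp
  rw [gram_eq_conjTranspose_mul (EuclideanSpace.basisFun (Fin 3) ℝ), hrepr, det_mul,
    det_conjTranspose, det_transpose, tetraVolume, mul_div_cancel₀ _ (by norm_num), sq_abs, sq,
    star_trivial]

/-- Volume of the double tetrahedron with metric `(t,1,1,1,1,t)`. -/
noncomputable def equihedralVolume (t : ℝ) : ℝ := t ^ 2 * √(1 - t ^ 2 / 2) / 3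

lemma two_mul_tetraVolume_equihedral {t : ℝ} {w : Fin 4 → EuclideanSpace ℝ (Fin 3)}
    (h01 : dist (w 0) (w 1) = t) (h23 : dist (w 2) (w 3) = t) (h02 : dist (w 0) (w 2) = 1)
    (h03 : dist (w 0) (w 3) = 1) (h12 : dist (w 1) (w 2) = 1) (h13 : dist (w 1) (w 3) = 1) :
    2 * tetraVolume w = equihedralVolume t := by
  have hdet : (6 * tetraVolume w) ^ 2 = (t ^ 2) ^ 2 * (1 - t ^ 2 / 2) := by
    rw [sq_six_mul_tetraVolume, det_fin_three]
    simp only [gram_apply, inner_sub_sub_eq_dist_sq, Fin.succ_zero_eq_one, Fin.succ_one_eq_two,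
      show Fin.succ (2 : Fin 3) = 3 from rfl, dist_self, dist_comm (w 2) (w 1),
      dist_comm (w 3) (w 1), dist_comm (w 3) (w 2), h01, h02, h03, h12, h13, h23]
    ring
  have h6 : 6 * tetraVolume w = t ^ 2 * √(1 - t ^ 2 / 2) := by
    have h0 : 0 ≤ 6 * tetraVolume w := by unfold tetraVolume; positivity
    rw [← Real.sqrt_sq h0, hdet, Real.sqrt_mul (by positivity), Real.sqrt_sq (by positivity)]
  rw [equihedralVolume]
  linarith

lemma equihedralVolume_pos {t : ℝ} (ht : t ≠ 0) (ht2 : t ^ 2 < 2) : 0 < equihedralVolume t := by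
  have : 0 < 1 - t ^ 2 / 2 := by linarith
  unfold equihedralVolume
  positivity

lemma tendsto_equihedralVolume : Tendsto equihedralVolume (𝓝 √2) (𝓝 0) := by
  have hcont : Continuous equihedralVolume := by unfold equihedralVolume; fun_prop
  simpa [equihedralVolume] using hcont.tendsto √2

noncomputable def equihedralEHR (t : ℝ) : ℝ :=
  2 * ((2 * π - 2 * arccos ((4 - 3 * t ^ 2) / (4 - t ^ 2))) * t) +
    4 * (2 * π - 2 * arccos (t ^ 2 / (4 - t ^ 2)))

lemma EHR_equihedral {t : ℝ} (ht : 0 < t) (ht4 : t ^ 2 < 4) {w : Fin 4 → EuclideanSpace ℝ (Fin 3)}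
    (h01 : dist (w 0) (w 1) = t) (h23 : dist (w 2) (w 3) = t) (h02 : dist (w 0) (w 2) = 1)
    (h03 : dist (w 0) (w 3) = 1) (h12 : dist (w 1) (w 2) = 1) (h13 : dist (w 1) (w 3) = 1) :
    EHR w = equihedralEHR t := by
  have h10 : dist (w 1) (w 0) = t := (dist_comm _ _).trans h01
  have h32 : dist (w 3) (w 2) = t := (dist_comm _ _).trans h23
  have h20 : dist (w 2) (w 0) = 1 := (dist_comm _ _).trans h02
  have h30 : dist (w 3) (w 0) = 1 := (dist_comm _ _).trans h03
  have h21 : dist (w 2) (w 1) = 1 := (dist_comm _ _).trans h12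
  have h31 : dist (w 3) (w 1) = 1 := (dist_comm _ _).trans h13
  simp only [EHR, edgeK, equihedralEHR, h01, h23, h02, h03, h12, h13,
    dihedralAngle_long_edge ht4.le h01 h23 h02 h03 h12 h13,
    dihedralAngle_long_edge ht4.le h23 h01 h20 h21 h30 h31,
    dihedralAngle_unit_edge ht ht4 h02 h13 h01 h03 h21 h23,
    dihedralAngle_unit_edge ht ht4 h03 h12 h01 h02 h31 h32,
    dihedralAngle_unit_edge ht ht4 h12 h03 h10 h13 h20 h23,
    dihedralAngle_unit_edge ht ht4 h13 h02 h10 h12 h30 h32]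
  ring

lemma tendsto_equihedralEHR : Tendsto equihedralEHR (𝓝 √2) (𝓝 (8 * π)) := by
  have hden : (4 : ℝ) - √2 ^ 2 ≠ 0 := by norm_num
  have hcont : ContinuousAt equihedralEHR √2 := by
    unfold equihedralEHR
    fun_prop (disch := exact hden)
  convert hcont.tendsto using 2
  norm_num [equihedralEHR]
  ring

lemma tendsto_div_rpow_atTop {α : Type*} {l : Filter α} {f g : α → ℝ} {c p : ℝ}
    (hf : Tendsto f l (𝓝 c)) (hc : 0 < c) (hg : Tendsto g l (𝓝 0)) (hg0 : ∀ᶠ x in l, 0 < g x)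
    (hp : 0 < p) : Tendsto (fun x => f x / g x ^ p) l atTop := by
  have hgp : Tendsto (fun x => g x ^ p) l (𝓝[>] 0) := by
    refine tendsto_nhdsWithin_iff.2 ⟨?_, hg0.mono fun x hx => rpow_pos_of_pos hx p⟩
    simpa [zero_rpow hp.ne'] using hg.rpow_const (Or.inr hp.le)
  simpa only [div_eq_mul_inv, Pi.inv_apply] using
    Tendsto.pos_mul_atTop hc hf hgp.inv_tendsto_nhdsGT_zero

theorem VEHR_unbounded_general (v : ℝ → Fin 4 → EuclideanSpace ℝ (Fin 3))
    (h01 : ∀ t ∈ Set.Ioo 1 (Real.sqrt 2), dist (v t 0) (v t 1) = t)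
    (h23 : ∀ t ∈ Set.Ioo 1 (Real.sqrt 2), dist (v t 2) (v t 3) = t)
    (h02 : ∀ t ∈ Set.Ioo 1 (Real.sqrt 2), dist (v t 0) (v t 2) = 1)
    (h03 : ∀ t ∈ Set.Ioo 1 (Real.sqrt 2), dist (v t 0) (v t 3) = 1)
    (h12 : ∀ t ∈ Set.Ioo 1 (Real.sqrt 2), dist (v t 1) (v t 2) = 1)
    (h13 : ∀ t ∈ Set.Ioo 1 (Real.sqrt 2), dist (v t 1) (v t 3) = 1) :
    Filter.Tendsto (fun t => EHR (v t))
        (nhdsWithin (Real.sqrt 2) (Set.Ioo 1 (Real.sqrt 2))) (nhds (8 * Real.pi)) ∧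
    Filter.Tendsto (fun t => 2 * tetraVolume (v t))
        (nhdsWithin (Real.sqrt 2) (Set.Ioo 1 (Real.sqrt 2))) (nhds 0) ∧
    Filter.Tendsto (fun t => EHR (v t) / (2 * tetraVolume (v t)) ^ ((1 : ℝ) / 3))
        (nhdsWithin (Real.sqrt 2) (Set.Ioo 1 (Real.sqrt 2))) Filter.atTop := by
  have hS : ∀ t ∈ Set.Ioo 1 √2, 0 < t ∧ t ^ 2 < 2 := fun t ht =>
    ⟨one_pos.trans ht.1, (Real.lt_sqrt (one_pos.trans ht.1).le).1 ht.2⟩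
  have hEHR : ∀ t ∈ Set.Ioo 1 √2, equihedralEHR t = EHR (v t) := fun t ht =>
    (EHR_equihedral (hS t ht).1 (by linarith [(hS t ht).2]) (h01 t ht) (h23 t ht) (h02 t ht)
      (h03 t ht) (h12 t ht) (h13 t ht)).symm
  have hV : ∀ t ∈ Set.Ioo 1 √2, equihedralVolume t = 2 * tetraVolume (v t) := fun t ht =>
    (two_mul_tetraVolume_equihedral (h01 t ht) (h23 t ht) (h02 t ht) (h03 t ht) (h12 t ht)
      (h13 t ht)).symm
  have hEHR_lim :=
    tendsto_nhdsWithin_congr hEHR (tendsto_equihedralEHR.mono_left nhdsWithin_le_nhds)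
  have hV_lim :=
    tendsto_nhdsWithin_congr hV (tendsto_equihedralVolume.mono_left nhdsWithin_le_nhds)
  have hV_pos : ∀ᶠ t in 𝓝[Set.Ioo 1 √2] √2, 0 < 2 * tetraVolume (v t) :=
    eventually_nhdsWithin_of_forall fun t ht =>
      hV t ht ▸ equihedralVolume_pos (hS t ht).1.ne' (hS t ht).2
  exact ⟨hEHR_lim, hV_lim,
    tendsto_div_rpow_atTop hEHR_lim (by positivity) hV_lim hV_pos (by norm_num)⟩

/-- On the double tetrahedron with the family of equihedral metrics
`ℓ(t) = (t,1,1,1,1,t)`, `t ∈ (1,√2)`, realized by tetrahedra `v t`: as `t → √2⁻`, the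
total curvature `EHR` tends to `8π`, the volume tends to `0`, and the volume-normalized
functional `VEHR = EHR / V^(1/3)` tends to `+∞`; hence `VEHR` is unbounded above. -/
theorem VEHR_unbounded (v : ℝ → Fin 4 → EuclideanSpace ℝ (Fin 3))
    (hnd : ∀ t ∈ Set.Ioo 1 (Real.sqrt 2), AffineIndependent ℝ (v t))
    (h01 : ∀ t ∈ Set.Ioo 1 (Real.sqrt 2), dist (v t 0) (v t 1) = t)
    (h23 : ∀ t ∈ Set.Ioo 1 (Real.sqrt 2), dist (v t 2) (v t 3) = t)
    (h02 : ∀ t ∈ Set.Ioo 1 (Real.sqrt 2), dist (v t 0) (v t 2) = 1)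
    (h03 : ∀ t ∈ Set.Ioo 1 (Real.sqrt 2), dist (v t 0) (v t 3) = 1)
    (h12 : ∀ t ∈ Set.Ioo 1 (Real.sqrt 2), dist (v t 1) (v t 2) = 1)
    (h13 : ∀ t ∈ Set.Ioo 1 (Real.sqrt 2), dist (v t 1) (v t 3) = 1) :
    Filter.Tendsto (fun t => EHR (v t))
        (nhdsWithin (Real.sqrt 2) (Set.Ioo 1 (Real.sqrt 2))) (nhds (8 * Real.pi)) ∧
    Filter.Tendsto (fun t => 2 * tetraVolume (v t))
        (nhdsWithin (Real.sqrt 2) (Set.Ioo 1 (Real.sqrt 2))) (nhds 0) ∧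
    Filter.Tendsto (fun t => EHR (v t) / (2 * tetraVolume (v t)) ^ ((1 : ℝ) / 3))
        (nhdsWithin (Real.sqrt 2) (Set.Ioo 1 (Real.sqrt 2))) Filter.atTop :=
  VEHR_unbounded_general v h01 h23 h02 h03 h12 h13
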